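/- arXiv:1902.10820 — 9 statements merged into one kernel-verified Lean document; each statement's English description precedes it below -/
import Mathlib

section
/- For all natural numbers m and n, there is a bijection between the set of functions f : Fin n → Fin m ⊕ Fin 2 that are injective on the left part, and the set of graph morphisms g from the standard m-cube to the standard n-cube that preserve pointwise meets and pointwise joins, i.e., g (x ⊓ y) = g x ⊓ g y and g (x ⊔ y) = g x ⊔ g y for all vertices x, y (where ⊓ and ⊔ are the pointwise Boolean 'and' and 'or' on Fin k → Bool). -/
/-- A function into a sum type is injective on the left part. -/
def LInj {α β γ : Type*} (f : α → β ⊕ γ) : Prop :=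
  ∀ a₁ a₂ b, f a₁ = Sum.inl b → f a₂ = Sum.inl b → a₁ = a₂

/-- Edge relation of the standard n-cube. -/
def CubeE (n : ℕ) (x y : Fin n → Bool) : Prop :=
  x = y ∨ ∃ i : Fin n, x i = false ∧ y i = true ∧ ∀ j, j ≠ i → x j = y j

/-- Graph morphisms between directed graphs given by edge relations. -/
def IsGraphHom {V V' : Type*} (E : V → V → Prop) (E' : V' → V' → Prop) (g : V → V') : Prop :=
  ∀ x y, E x y → E' (g x) (g y)

/-- Preservation of pointwise meets. -/
def PresMeet {m n : ℕ} (g : (Fin m → Bool) → (Fin n → Bool)) : Prop :=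
  ∀ x y, g (fun i => x i && y i) = fun i => g x i && g y i

/-- Preservation of pointwise joins. -/
def PresJoin {m n : ℕ} (g : (Fin m → Bool) → (Fin n → Bool)) : Prop :=
  ∀ x y, g (fun i => x i || y i) = fun i => g x i || g y i

/-!
A map `g : 2^m → 2^n` preserving `∧` and `∨` is determined by its coordinates, each a lattice
homomorphism `2^m → 2`. Such a homomorphism is either constant, or sends `⊥` to `false` and `⊤` to
`true`; it then commutes with complement, so the sets it sends to `true` form an ultrafilter on
`Fin m`, which is principal: the homomorphism is a coordinate projection. Hence `g = cubeMap f`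
for a unique `f : Fin n → Fin m ⊕ Fin 2`. Such a `g` is monotone, and `g x`, `g y` differ exactly
at the `a` with `f a = inl j` for a `j` where `x` and `y` differ; as a cube edge flips a single
coordinate upwards, `g` maps edges to edges iff no two coordinates of `f` point to the same `j`.
-/

section CubeMap

variable {ι κ : Type*}

def coordOrConst (c : ι ⊕ Fin 2) (x : ι → Bool) : Bool :=
  Sum.elim x finTwoEquiv c

def cubeMap (f : κ → ι ⊕ Fin 2) (x : ι → Bool) : κ → Bool :=
  fun a => coordOrConst (f a) x

@[simp] lemma coordOrConst_inl (j : ι) (x : ι → Bool) : coordOrConst (.inl j) x = x j := rfl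

@[simp] lemma coordOrConst_inr (c : Fin 2) (x : ι → Bool) :
    coordOrConst (.inr c) x = finTwoEquiv c :=
  rfl

lemma coordOrConst_and (c : ι ⊕ Fin 2) (x y : ι → Bool) :
    coordOrConst c (fun i => x i && y i) = (coordOrConst c x && coordOrConst c y) := by
  cases c <;> simp

lemma coordOrConst_or (c : ι ⊕ Fin 2) (x y : ι → Bool) :
    coordOrConst c (fun i => x i || y i) = (coordOrConst c x || coordOrConst c y) := by
  cases c <;> simp

lemma coordOrConst_injective :
    Function.Injective (coordOrConst : ι ⊕ Fin 2 → (ι → Bool) → Bool) := by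
  classical
  intro c c' h
  have hbot := congrFun h fun _ => false
  have htop := congrFun h fun _ => true
  rcases c with j | b <;> rcases c' with j' | b'
  · simpa using congrFun h fun i => decide (i = j')
  · simp only [coordOrConst_inl, coordOrConst_inr] at hbot htop
    exact absurd (hbot.trans htop.symm) Bool.false_ne_true
  · simp only [coordOrConst_inl, coordOrConst_inr] at hbot htop
    exact absurd (hbot.symm.trans htop) Bool.false_ne_true
  · exact congrArg _ (finTwoEquiv.injective hbot)

lemma cubeMap_injective : Function.Injective (cubeMap : (κ → ι ⊕ Fin 2) → _) := by
  intro f f' h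
  exact funext fun a => coordOrConst_injective <| funext fun x => congrFun (congrFun h x) a

section AndOrHom

variable {h : (ι → Bool) → Bool}
  (hand : ∀ x y, h (fun i => x i && y i) = (h x && h y))
  (hor : ∀ x y, h (fun i => x i || y i) = (h x || h y))
include hand

lemma eq_true_of_imp_of_and_hom {x y : ι → Bool} (hxy : ∀ i, x i = true → y i = true)
    (hx : h x = true) : h y = true := by
  have hmeet : (fun i => x i && y i) = x := funext fun i => by cases hi : x i <;> simp [hi, hxy i]
  rw [← hmeet, hand, Bool.and_eq_true] at hx
  exact hx.2

include hor

lemma map_not_of_and_or_hom (hbot : h (fun _ => false) = false) (htop : h (fun _ => true) = true)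
    (x : ι → Bool) : h (fun i => !x i) = !h x := by
  have h₁ := hand x fun i => !x i
  have h₂ := hor x fun i => !x i
  simp only [Bool.and_not_self, Bool.or_not_self, hbot, htop] at h₁ h₂
  have hcompl : ∀ a b : Bool, (a && b) = false → (a || b) = true → b = !a := by decide
  exact hcompl _ _ h₁.symm h₂.symm

open Classical in
def ultrafilterOfAndOrHom (hbot : h (fun _ => false) = false) (htop : h (fun _ => true) = true) :
    Ultrafilter ι :=
  .ofComplNotMemIff
    { sets := {s | h (fun i => decide (i ∈ s)) = true}
      univ_sets := by simpa using htop
      sets_of_superset := fun hs hst =>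
        eq_true_of_imp_of_and_hom hand (by simpa using fun i hi => hst hi) hs
      inter_sets := fun {s t} hs ht => by
        simp only [Set.mem_ofPred_eq, Set.mem_inter_iff, Bool.decide_and, hand] at hs ht ⊢
        rw [hs, ht, Bool.and_self] }
    fun s => by simp [map_not_of_and_or_hom hand hor hbot htop]

open Classical in
lemma mem_ultrafilterOfAndOrHom {hbot : h (fun _ => false) = false}
    {htop : h (fun _ => true) = true} {s : Set ι} :
    s ∈ ultrafilterOfAndOrHom hand hor hbot htop ↔ h (fun i => decide (i ∈ s)) = true :=
  Iff.rfl

lemma exists_coordOrConst_eq [Finite ι] : ∃ c, coordOrConst c = h := by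
  by_cases hbot : h (fun _ => false) = true
  · refine ⟨.inr (finTwoEquiv.symm true), funext fun x => ?_⟩
    simp only [coordOrConst_inr, Equiv.apply_symm_apply]
    exact ((hor (fun _ => false) x).trans (by rw [hbot, Bool.true_or])).symm
  by_cases htop : h (fun _ => true) = false
  · refine ⟨.inr (finTwoEquiv.symm false), funext fun x => ?_⟩
    simp only [coordOrConst_inr, Equiv.apply_symm_apply]
    exact ((hand (fun _ => true) x).trans (by rw [htop, Bool.false_and])).symm
  rw [Bool.not_eq_true] at hbot
  rw [Bool.not_eq_false] at htop
  obtain ⟨j, hj⟩ := (ultrafilterOfAndOrHom hand hor hbot htop).eq_pure_of_finite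
  refine ⟨.inl j, funext fun x => ?_⟩
  have hmem : {i | x i = true} ∈ ultrafilterOfAndOrHom hand hor hbot htop ↔ x j = true := by
    rw [hj, Ultrafilter.mem_pure]
    rfl
  rw [mem_ultrafilterOfAndOrHom] at hmem
  rw [coordOrConst_inl, Bool.eq_iff_iff, ← hmem]
  simp

end AndOrHom

lemma exists_cubeMap_eq [Finite ι] {g : (ι → Bool) → κ → Bool}
    (hand : ∀ x y, g (fun i => x i && y i) = fun a => g x a && g y a)
    (hor : ∀ x y, g (fun i => x i || y i) = fun a => g x a || g y a) : ∃ f, cubeMap f = g := by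
  choose f hf using fun a => exists_coordOrConst_eq (h := fun x => g x a)
    (fun x y => congrFun (hand x y) a) (fun x y => congrFun (hor x y) a)
  exact ⟨f, funext fun x => funext fun a => congrFun (hf a) x⟩

lemma cubeMap_mono (f : κ → ι ⊕ Fin 2) : Monotone (cubeMap f) := by
  intro x y hxy a
  show coordOrConst (f a) x ≤ coordOrConst (f a) y
  rcases f a with j | c
  · exact hxy j
  · exact le_rfl

lemma cubeMap_ne_iff {f : κ → ι ⊕ Fin 2} {x y : ι → Bool} {a : κ} :
    cubeMap f x a ≠ cubeMap f y a ↔ ∃ j, f a = .inl j ∧ x j ≠ y j := by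
  unfold cubeMap
  cases f a <;> simp

lemma cubeE_iff {n : ℕ} {x y : Fin n → Bool} :
    CubeE n x y ↔ x ≤ y ∧ ∀ a a', x a ≠ y a → x a' ≠ y a' → a = a' := by
  constructor
  · rintro (rfl | ⟨i, hxi, hyi, hxy⟩)
    · exact ⟨le_rfl, fun a _ ha => absurd rfl ha⟩
    · have hdiff : ∀ a, x a ≠ y a → a = i := fun a ha => by_contra fun hai => ha (hxy a hai)
      refine ⟨fun a => ?_, fun a a' ha ha' => (hdiff a ha).trans (hdiff a' ha').symm⟩
      by_cases hai : a = i
      · subst hai; simp [hxi]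
      · exact (hxy a hai).le
  · rintro ⟨hle, huniq⟩
    by_cases hxy : x = y
    · exact .inl hxy
    obtain ⟨i, hi⟩ := Function.ne_iff.1 hxy
    obtain ⟨hxi, hyi⟩ := Bool.lt_iff.1 (lt_of_le_of_ne (hle i) hi)
    exact .inr ⟨i, hxi, hyi, fun j hj => by_contra fun hne => hj (huniq j i hne hi)⟩

lemma isGraphHom_cubeMap_iff {m n : ℕ} {f : Fin n → Fin m ⊕ Fin 2} :
    IsGraphHom (CubeE m) (CubeE n) (cubeMap f) ↔ LInj f := by
  constructor
  · intro hg a₁ a₂ b h₁ h₂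
    have hedge : CubeE m (fun _ => false) (fun i => decide (i = b)) :=
      .inr ⟨b, rfl, by simp, fun j hj => by simp [hj]⟩
    refine (cubeE_iff.1 (hg _ _ hedge)).2 a₁ a₂ ?_ ?_ <;> exact cubeMap_ne_iff.2 ⟨b, ‹_›, by simp⟩
  · intro hf x y hxy
    obtain ⟨hle, huniq⟩ := cubeE_iff.1 hxy
    refine cubeE_iff.2 ⟨cubeMap_mono f hle, fun a a' ha ha' => ?_⟩
    obtain ⟨j, hj, hxj⟩ := cubeMap_ne_iff.1 ha
    obtain ⟨j', hj', hxj'⟩ := cubeMap_ne_iff.1 ha'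
    exact hf a a' j hj (huniq j' j hxj' hxj ▸ hj')

end CubeMap

theorem stmt1 (m n : ℕ) :
    Nonempty ({f : Fin n → Fin m ⊕ Fin 2 // LInj f} ≃
      {g : (Fin m → Bool) → (Fin n → Bool) //
        IsGraphHom (CubeE m) (CubeE n) g ∧ PresMeet g ∧ PresJoin g}) := by
  refine ⟨.ofBijective (fun f => ⟨cubeMap f, isGraphHom_cubeMap_iff.2 f.2,
    fun x y => funext fun a => coordOrConst_and (f.1 a) x y,
    fun x y => funext fun a => coordOrConst_or (f.1 a) x y⟩) ⟨?_, ?_⟩⟩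
  · intro f f' h
    exact Subtype.ext (cubeMap_injective (congrArg Subtype.val h))
  · rintro ⟨g, hhom, hmeet, hjoin⟩
    obtain ⟨f, rfl⟩ := exists_cubeMap_eq hmeet hjoin
    exact ⟨⟨f, isGraphHom_cubeMap_iff.1 hhom⟩, rfl⟩
end

section
/- For all natural numbers n and m, the map that sends a join-preserving graph morphism g from the standard n-cube to the standard m-cube to its restriction g ∘ ι along the inclusion ι of B_n into the standard n-cube is a bijection onto the set of all graph morphisms from B_n to the standard m-cube. Moreover, such a g preserves pointwise meets if and only if g ∘ ι preserves pointwise meets (where B_n is closed under pointwise meet, so meets of B_n vertices are computed pointwise). -/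
/-- The vertices of `B n`: the origin together with the base vectors, i.e.
vertices taking the value `true` at most once. -/
def BV (n : ℕ) : Type :=
  {v : Fin n → Bool // ∀ i j, v i = true → v j = true → i = j}

/-- `BV n` is closed under pointwise meets. -/
def BVmeet {n : ℕ} (u v : BV n) : BV n :=
  ⟨fun i => u.val i && v.val i, fun i j hi hj =>
    u.2 i j (by simp_all) (by simp_all)⟩

/-!
A join-preserving map `g` between cubes is determined by `g ⊥` and the images `g eᵢ` of the unit
vectors, since every vertex is a finite join of unit vectors; conversely, any `o` and `bᵢ ≥ o`
extend to the join-preserving map `x ↦ o ⊔ ⨆_{xᵢ} bᵢ`. Such a map is a graph morphism as soon as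
each `o → bᵢ` is an edge, because an edge `x → x ⊔ eᵢ` goes to `g x → g x ⊔ bᵢ` with `o ≤ g x`.
It preserves meets as soon as `bᵢ ⊓ bⱼ ≤ o` for `i ≠ j`, which is what meet preservation on `B n`
says, since `eᵢ ⊓ eⱼ = ⊥`.
-/

section

variable {n m : ℕ}

def unitVec (i : Fin n) : Fin n → Bool := fun j => decide (j = i)

lemma cubeE_bot_unitVec (i : Fin n) : CubeE n ⊥ (unitVec i) :=
  Or.inr ⟨i, rfl, by simp [unitVec], fun j hj => by simp [unitVec, hj]⟩

lemma cubeE_or_unitVec (x : Fin n → Bool) (i : Fin n) :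
    CubeE n x (fun j => x j || unitVec i j) := by
  by_cases hx : x i = true
  · left
    funext j
    by_cases hj : j = i <;> simp_all [unitVec]
  · exact Or.inr ⟨i, by simpa using hx, by simp [unitVec], fun j hj => by simp [unitVec, hj]⟩

lemma cubeE_iff_s2 {a b : Fin n → Bool} :
    CubeE n a b ↔ a = b ∨ ∃ i, a i = false ∧ b = fun j => a j || unitVec i j := by
  constructor
  · rintro (rfl | ⟨i, hai, hbi, hab⟩)
    · exact Or.inl rfl
    · refine Or.inr ⟨i, hai, funext fun j => ?_⟩
      by_cases hj : j = i
      · subst hj; simp [unitVec, hbi]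
      · simp [unitVec, hj, hab j hj]
  · rintro (rfl | ⟨i, -, rfl⟩)
    · exact Or.inl rfl
    · exact cubeE_or_unitVec a i

lemma CubeE.le {a b : Fin n → Bool} (h : CubeE n a b) : a ≤ b := by
  rcases h with rfl | ⟨i, hai, hbi, hab⟩
  · exact le_rfl
  · intro k
    by_cases hk : k = i
    · subst hk; simp [hai]
    · rw [hab k hk]

lemma CubeE.or_of_le {o b z : Fin m → Bool} (hob : CubeE m o b) (hoz : o ≤ z) :
    CubeE m z (fun k => z k || b k) := by
  have hzo : ∀ k, (z k || o k) = z k := fun k => sup_eq_left.mpr (hoz k)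
  rcases cubeE_iff_s2.mp hob with rfl | ⟨i, -, rfl⟩
  · simp only [hzo]
    exact Or.inl rfl
  · simpa only [← Bool.or_assoc, hzo] using cubeE_or_unitVec z i

section PresJoin

variable {g g₁ g₂ : (Fin n → Bool) → (Fin m → Bool)}

lemma PresJoin.map_bot_le (hg : PresJoin g) (x : Fin n → Bool) : g ⊥ ≤ g x := by
  have hx : g x = fun k => g x k || g ⊥ k := by simpa using hg x ⊥
  intro k
  rw [hx]
  exact le_sup_right

lemma PresJoin.ext (hg₁ : PresJoin g₁) (hg₂ : PresJoin g₂) (h₀ : g₁ ⊥ = g₂ ⊥)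
    (h : ∀ i, g₁ (unitVec i) = g₂ (unitVec i)) : g₁ = g₂ := by
  have hfin : ∀ s : Finset (Fin n),
      g₁ (fun j => decide (j ∈ s)) = g₂ (fun j => decide (j ∈ s)) := by
    intro s
    induction s using Finset.induction_on with
    | empty =>
      simp only [Finset.notMem_empty, decide_false]
      exact h₀
    | insert a s _ ih =>
      have hins : (fun j => decide (j ∈ insert a s)) = fun j => decide (j ∈ s) || unitVec a j := by
        funext j
        simp [unitVec, Bool.or_comm]
      rw [hins, hg₁, hg₂, ih, h]
  funext x
  simpa using hfin (Finset.univ.filter fun j => x j = true)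

lemma PresJoin.isGraphHom (hg : PresJoin g) (h : ∀ i, CubeE m (g ⊥) (g (unitVec i))) :
    IsGraphHom (CubeE n) (CubeE m) g := by
  intro x y hxy
  rcases cubeE_iff_s2.mp hxy with rfl | ⟨i, -, rfl⟩
  · exact Or.inl rfl
  · rw [hg]
    exact (h i).or_of_le (hg.map_bot_le x)

end PresJoin

section joinExtension

variable {o : Fin m → Bool} {b : Fin n → Fin m → Bool}

def joinExtension (o : Fin m → Bool) (b : Fin n → Fin m → Bool) : (Fin n → Bool) → Fin m → Bool :=
  fun x k => o k || decide (∃ i, x i = true ∧ b i k = true)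

lemma joinExtension_presJoin : PresJoin (joinExtension o b) := by
  intro x y
  funext k
  rw [Bool.eq_iff_iff]
  simp only [joinExtension, Bool.or_eq_true, decide_eq_true_eq, or_and_right, exists_or]
  grind

lemma joinExtension_bot : joinExtension o b ⊥ = o := by
  funext k
  simp [joinExtension]

lemma joinExtension_unitVec (hob : ∀ i, o ≤ b i) (i : Fin n) :
    joinExtension o b (unitVec i) = b i := by
  funext k
  simpa [joinExtension, unitVec] using sup_eq_right.mpr (hob i k)

lemma joinExtension_presMeet (h : ∀ i j, i ≠ j → ∀ k, b i k = true → b j k = true → o k = true) :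
    PresMeet (joinExtension o b) := by
  intro x y
  funext k
  rw [Bool.eq_iff_iff]
  simp only [joinExtension, Bool.and_eq_true, Bool.or_eq_true, decide_eq_true_eq]
  constructor
  · rintro (hk | ⟨i, ⟨hx, hy⟩, hik⟩)
    · exact ⟨Or.inl hk, Or.inl hk⟩
    · exact ⟨Or.inr ⟨i, hx, hik⟩, Or.inr ⟨i, hy, hik⟩⟩
  · rintro ⟨hk | ⟨i, hx, hik⟩, hk | ⟨j, hy, hjk⟩⟩
    · exact Or.inl hk
    · exact Or.inl hk
    · exact Or.inl hk
    · by_cases hij : i = j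
      · subst hij
        exact Or.inr ⟨i, ⟨hx, hy⟩, hik⟩
      · exact Or.inl (h i j hij k hik hjk)

end joinExtension

lemma PresJoin.eq_joinExtension {g : (Fin n → Bool) → (Fin m → Bool)} (hg : PresJoin g) :
    g = joinExtension (g ⊥) (fun i => g (unitVec i)) :=
  hg.ext joinExtension_presJoin joinExtension_bot.symm
    fun i => (joinExtension_unitVec (fun _ => hg.map_bot_le _) i).symm

end

namespace BV

variable {n : ℕ}

def bot : BV n := ⟨⊥, fun _ _ hi _ => by simp at hi⟩

def unitVec (i : Fin n) : BV n := ⟨_root_.unitVec i, fun a b ha hb => by simp_all [_root_.unitVec]⟩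

@[simp]
lemma val_unitVec (i : Fin n) : (unitVec i).val = _root_.unitVec i := rfl

lemma eq_bot_or_unitVec (v : BV n) : v = bot ∨ ∃ i, v = unitVec i := by
  by_cases h : ∃ i, v.val i = true
  · obtain ⟨i, hi⟩ := h
    refine Or.inr ⟨i, Subtype.ext (funext fun j => ?_)⟩
    by_cases hj : j = i
    · subst hj; simp [_root_.unitVec, hi]
    · simpa [_root_.unitVec, hj] using fun hvj => hj (v.2 j i hvj hi)
  · simp only [not_exists, Bool.not_eq_true] at h
    exact Or.inl (Subtype.ext (funext h))

lemma val_BVmeet_unitVec_of_ne {i j : Fin n} (hij : i ≠ j) :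
    (BVmeet (unitVec i) (unitVec j)).val = ⊥ := by
  funext a
  by_cases ha : a = i
  · subst ha; simp [BVmeet, _root_.unitVec, hij]
  · simp [BVmeet, _root_.unitVec, ha]

end BV

theorem stmt2 (n m : ℕ) :
    Function.Bijective
      (fun g : {g : (Fin n → Bool) → (Fin m → Bool) //
            IsGraphHom (CubeE n) (CubeE m) g ∧ PresJoin g} =>
        (⟨fun v => g.val v.val, fun u v h => g.2.1 u.val v.val h⟩ :
          {h : BV n → (Fin m → Bool) //
            ∀ u v : BV n, CubeE n u.val v.val → CubeE m (h u) (h v)}))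
    ∧
    (∀ g : {g : (Fin n → Bool) → (Fin m → Bool) //
          IsGraphHom (CubeE n) (CubeE m) g ∧ PresJoin g},
      PresMeet g.val ↔
        ∀ u v : BV n,
          g.val (BVmeet u v).val = fun i => g.val u.val i && g.val v.val i) := by
  refine ⟨⟨?injective, ?surjective⟩, ?presMeet_iff⟩
  · rintro ⟨g₁, _, hg₁⟩ ⟨g₂, _, hg₂⟩ hres
    replace hres := congrArg Subtype.val hres
    exact Subtype.ext (hg₁.ext hg₂ (congrFun hres BV.bot) fun i => congrFun hres (BV.unitVec i))
  · rintro ⟨h, hh⟩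
    have hedge i : CubeE m (h BV.bot) (h (BV.unitVec i)) := hh _ _ (cubeE_bot_unitVec i)
    have hext := joinExtension_unitVec fun i => (hedge i).le
    refine ⟨⟨joinExtension (h BV.bot) (fun i => h (BV.unitVec i)),
      joinExtension_presJoin.isGraphHom fun i => ?_, joinExtension_presJoin⟩,
      Subtype.ext (funext fun v => ?_)⟩
    · rw [joinExtension_bot, hext]
      exact hedge i
    · rcases BV.eq_bot_or_unitVec v with rfl | ⟨i, rfl⟩
      · exact joinExtension_bot
      · exact hext i
  · rintro ⟨g, _, hg⟩
    refine ⟨fun hm u v => hm u.val v.val, fun hm => ?_⟩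
    change PresMeet g
    rw [hg.eq_joinExtension]
    refine joinExtension_presMeet fun i j hij k hik hjk => ?_
    have hmeet := congrFun (hm (BV.unitVec i) (BV.unitVec j)) k
    rw [BV.val_BVmeet_unitVec_of_ne hij] at hmeet
    simpa [hik, hjk] using hmeet
end

section
/- For every natural number n and all vertices x, y : Fin (n+1) → Bool, the twisted-cube edge relation T_{n+1} x y holds if and only if one of the following holds: (i) x = y; (ii) x 0 = y 0 = false and T_n (y ∘ Fin.succ) (x ∘ Fin.succ); (iii) x 0 = y 0 = true and T_n (x ∘ Fin.succ) (y ∘ Fin.succ); (iv) x 0 = false, y 0 = true, and x ∘ Fin.succ = y ∘ Fin.succ. (This states that the non-recursive parity definition of the twisted cube agrees with the recursive 'twisted iteration' definition, where the new dimension is dimension 0, the copy with first bit false has all edges reversed, the copy with first bit true is unchanged, and connecting edges go from first bit false to first bit true.) -/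
/-- Edge relation of the twisted n-cube. -/
def TwE (n : ℕ) (x y : Fin n → Bool) : Prop :=
  x = y ∨ ∃ i : Fin n, (∀ j, j ≠ i → x j = y j) ∧ y i = !(x i) ∧
    (x i = true ↔ Odd (Finset.univ.filter (fun j : Fin n => j < i ∧ x j = false)).card)

/-!
Splitting off coordinate `0`, the count of `false` bits below `i.succ` is the count for the tail
below `i`, plus one exactly when `x 0 = false`. A flip of the tail therefore keeps its parity
condition when the first bit is `true`, and has it negated when the first bit is `false`; negating
the parity condition is the same as reversing the edge. A flip at coordinate `0` has an empty count
below it, so it is exactly an edge from first bit `false` to first bit `true`.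
-/

namespace TwE

variable {n : ℕ}

def falseCountBelow (x : Fin n → Bool) (i : Fin n) : ℕ :=
  (Finset.univ.filter (fun j : Fin n => j < i ∧ x j = false)).card

def IsFlip (x y : Fin n → Bool) (i : Fin n) : Prop :=
  (∀ j, j ≠ i → x j = y j) ∧ y i = !(x i) ∧ (x i = true ↔ Odd (falseCountBelow x i))

theorem iff_eq_or_exists_isFlip {x y : Fin n → Bool} :
    TwE n x y ↔ x = y ∨ ∃ i, IsFlip x y i :=
  Iff.rfl

theorem falseCountBelow_zero (x : Fin (n + 1) → Bool) : falseCountBelow x 0 = 0 := by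
  simp [falseCountBelow]

theorem falseCountBelow_succ (x : Fin (n + 1) → Bool) (i : Fin n) :
    falseCountBelow x i.succ = falseCountBelow (x ∘ Fin.succ) i + if x 0 then 0 else 1 := by
  rw [falseCountBelow, falseCountBelow, Finset.card_filter, Finset.card_filter, Fin.sum_univ_succ,
    add_comm]
  cases x 0 <;> simp [Fin.succ_pos, Fin.succ_lt_succ_iff]

theorem falseCountBelow_congr {x y : Fin n → Bool} {i : Fin n} (h : ∀ j < i, x j = y j) :
    falseCountBelow x i = falseCountBelow y i := by
  unfold falseCountBelow
  congr 1
  exact Finset.filter_congr fun j _ => and_congr_right fun hj => by rw [h j hj]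

theorem isFlip_comm_iff {x y : Fin n → Bool} {i : Fin n} :
    IsFlip y x i ↔ (∀ j, j ≠ i → x j = y j) ∧ y i = !(x i) ∧
      (x i = true ↔ ¬Odd (falseCountBelow x i)) := by
  unfold IsFlip
  by_cases hoff : ∀ j, j ≠ i → x j = y j
  · have hyx : ∀ j, j ≠ i → y j = x j := fun j hj => (hoff j hj).symm
    rw [falseCountBelow_congr fun j hj => hyx j hj.ne]
    simp only [iff_true_intro hoff, iff_true_intro hyx, true_and]
    cases x i <;> cases y i <;> simp
  · have hyx : ¬∀ j, j ≠ i → y j = x j := fun h => hoff fun j hj => (h j hj).symm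
    simp only [hoff, hyx, false_and]

theorem isFlip_zero_iff {x y : Fin (n + 1) → Bool} :
    IsFlip x y 0 ↔ x 0 = false ∧ y 0 = true ∧ x ∘ Fin.succ = y ∘ Fin.succ := by
  simp only [IsFlip, falseCountBelow_zero, Fin.forall_fin_succ, funext_iff, Function.comp_apply]
  cases x 0 <;> simp [Fin.succ_ne_zero, and_comm]

theorem not_isFlip_succ_of_ne {x y : Fin (n + 1) → Bool} (h : x 0 ≠ y 0) (i : Fin n) :
    ¬IsFlip x y i.succ :=
  fun hf => h (hf.1 0 (Fin.succ_ne_zero i).symm)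

theorem isFlip_succ_of_true {x y : Fin (n + 1) → Bool} (hx : x 0 = true) (hy : y 0 = true)
    (i : Fin n) : IsFlip x y i.succ ↔ IsFlip (x ∘ Fin.succ) (y ∘ Fin.succ) i := by
  simp [IsFlip, Fin.forall_fin_succ, falseCountBelow_succ, hx, hy, (Fin.succ_ne_zero i).symm]

theorem isFlip_succ_of_false {x y : Fin (n + 1) → Bool} (hx : x 0 = false) (hy : y 0 = false)
    (i : Fin n) : IsFlip x y i.succ ↔ IsFlip (y ∘ Fin.succ) (x ∘ Fin.succ) i := by
  rw [isFlip_comm_iff]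
  simp [IsFlip, Fin.forall_fin_succ, falseCountBelow_succ, hx, hy, (Fin.succ_ne_zero i).symm,
    Nat.odd_add_one]

end TwE

theorem stmt5 (n : ℕ) (x y : Fin (n + 1) → Bool) :
    TwE (n + 1) x y ↔
      x = y ∨
      (x 0 = false ∧ y 0 = false ∧ TwE n (y ∘ Fin.succ) (x ∘ Fin.succ)) ∨
      (x 0 = true ∧ y 0 = true ∧ TwE n (x ∘ Fin.succ) (y ∘ Fin.succ)) ∨
      (x 0 = false ∧ y 0 = true ∧ x ∘ Fin.succ = y ∘ Fin.succ) := by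
  have hxy : x = y ↔ x 0 = y 0 ∧ x ∘ Fin.succ = y ∘ Fin.succ := by
    simp only [funext_iff, Fin.forall_fin_succ, Function.comp_apply]
  simp only [TwE.iff_eq_or_exists_isFlip, Fin.exists_fin_succ, TwE.isFlip_zero_iff]
  cases hx : x 0 <;> cases hy : y 0
  case false.false => simp [hxy, hx, hy, TwE.isFlip_succ_of_false hx hy, eq_comm]
  case false.true | true.false => simp [hxy, hx, hy, TwE.not_isFlip_succ_of_ne]
  case true.true => simp [hxy, hx, hy, TwE.isFlip_succ_of_true hx hy]
end

section
/- For every natural number n, there exists a bijection g between Fin n → Bool and Fin (2^n) such that for all vertices x, y : Fin n → Bool, the reflexive-transitive closure of the twisted-cube edge relation T_n relates x to y if and only if g x ≤ g y. In other words, the free preorder generated by the twisted n-cube is isomorphic to the total order on 2^n elements. -/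
open Finset Relation

theorem Relation.reflTransGen_iff_le_of_covBy {α β : Type*} [PartialOrder β] [SuccOrder β]
    [IsSuccArchimedean β] {r : α → α → Prop} (e : α ≃ β)
    (hmono : ∀ x y, r x y → e x ≤ e y) (hcov : ∀ x y, e x ⋖ e y → r x y) {x y : α} :
    ReflTransGen r x y ↔ e x ≤ e y := by
  refine ⟨fun h => ?_, fun h => ?_⟩
  · induction h with
    | refl => exact le_rfl
    | tail _ hyz ih => exact ih.trans (hmono _ _ hyz)
  · have hsucc : ∀ b ∈ Set.Ico (e x) (e y), r (e.symm b) (e.symm (Order.succ b)) := fun b hb =>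
      hcov _ _ (by simpa using Order.covBy_succ_of_not_isMax (not_isMax_of_lt hb.2))
    simpa [Function.onFun] using (reflTransGen_of_succ_of_le _ hsucc h).lift e.symm fun _ _ h => h

namespace TwE

variable {n : ℕ}

lemma card_filter_lt_succ (a : Bool) (t : Fin n → Bool) (i : Fin n) :
    #{j | j < i.succ ∧ (Fin.cons a t : Fin (n + 1) → Bool) j = false}
      = #{j | j < i ∧ t j = false} + (if a then 0 else 1) := by
  rw [Fin.card_filter_univ_succ]
  cases a <;> simp [Fin.succ_pos]

lemma card_filter_lt_congr {x y : Fin n → Bool} {i : Fin n} (h : ∀ j < i, x j = y j) :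
    #{j | j < i ∧ x j = false} = #{j | j < i ∧ y j = false} :=
  congrArg card <| filter_congr fun j _ => and_congr_right fun hj => by rw [h j hj]

lemma twE_swap_iff {t s : Fin n → Bool} :
    TwE n s t ↔ t = s ∨ ∃ i, (∀ j, j ≠ i → t j = s j) ∧ s i = !(t i) ∧
      (t i = true ↔ ¬Odd #{j | j < i ∧ t j = false}) := by
  unfold TwE
  refine or_congr eq_comm (exists_congr fun i => ?_)
  constructor <;> rintro ⟨hne, hi, hodd⟩ <;>
    rw [card_filter_lt_congr fun j hj => hne j hj.ne] at hodd <;>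
    refine ⟨fun j hj => (hne j hj).symm, by simp [hi], ?_⟩ <;>
    cases hs : s i <;> cases ht : t i <;> simp_all

lemma twE_cons_iff {a b : Bool} {t s : Fin n → Bool} :
    TwE (n + 1) (Fin.cons a t) (Fin.cons b s) ↔
      (a = false ∧ b = true ∧ t = s) ∨ (a = b ∧ if a then TwE n t s else TwE n s t) := by
  rw [TwE, Fin.exists_fin_succ]
  simp only [Fin.forall_fin_succ, Fin.cons_zero, Fin.cons_succ, Fin.cons_inj, ne_eq,
    Fin.succ_ne_zero, (Fin.succ_ne_zero _).symm, not_false_eq_true, forall_const, Fin.succ_inj,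
    card_filter_lt_succ]
  cases a <;> cases b
  · simp [twE_swap_iff, funext_iff, Nat.odd_add_one]
  · simp [funext_iff]
  · simp
  · simp [TwE, funext_iff]

def rank : (n : ℕ) → (Fin n → Bool) → ℕ
  | 0, _ => 0
  | n + 1, x => if x 0 then 2 ^ n + rank n (Fin.tail x) else 2 ^ n - 1 - rank n (Fin.tail x)

@[simp]
lemma rank_cons_false (t : Fin n → Bool) :
    rank (n + 1) (Fin.cons false t) = 2 ^ n - 1 - rank n t := by
  simp [rank]

@[simp]
lemma rank_cons_true (t : Fin n → Bool) : rank (n + 1) (Fin.cons true t) = 2 ^ n + rank n t := by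
  simp [rank]

lemma rank_lt : ∀ {n : ℕ} (x : Fin n → Bool), rank n x < 2 ^ n
  | 0, _ => Nat.one_pos
  | n + 1, x => by
    cases x using Fin.consCases with
    | cons a t =>
      have := rank_lt t
      cases a <;> simp only [rank_cons_false, rank_cons_true, pow_succ] <;> omega

lemma rank_injective : ∀ n, Function.Injective (rank n)
  | 0, _, _, _ => Subsingleton.elim _ _
  | n + 1, x, y, h => by
    cases x using Fin.consCases with
    | cons a t =>
    cases y using Fin.consCases with
    | cons b s =>
    have ht := rank_lt t
    have hs := rank_lt s
    rw [Fin.cons_inj]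
    cases a <;> cases b <;> simp only [rank_cons_false, rank_cons_true] at h
    · exact ⟨rfl, rank_injective n (by omega)⟩
    · omega
    · omega
    · exact ⟨rfl, rank_injective n (by omega)⟩

lemma rank_le_of_twE : ∀ {n : ℕ} {x y : Fin n → Bool}, TwE n x y → rank n x ≤ rank n y
  | 0, _, _, _ => le_rfl
  | n + 1, x, y, h => by
    cases x using Fin.consCases with
    | cons a t =>
    cases y using Fin.consCases with
    | cons b s =>
    have ht := rank_lt t
    have hs := rank_lt s
    rcases twE_cons_iff.1 h with ⟨rfl, rfl, rfl⟩ | ⟨rfl, hts⟩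
    · simp only [rank_cons_false, rank_cons_true]
      omega
    · cases a <;> simp only [Bool.false_eq_true, ↓reduceIte] at hts <;>
        have := rank_le_of_twE hts <;> simp only [rank_cons_false, rank_cons_true] <;> omega

lemma twE_of_rank_eq_add_one :
    ∀ {n : ℕ} {x y : Fin n → Bool}, rank n y = rank n x + 1 → TwE n x y
  | 0, _, _, h => by simp [rank] at h
  | n + 1, x, y, h => by
    cases x using Fin.consCases with
    | cons a t =>
    cases y using Fin.consCases with
    | cons b s =>
    have ht := rank_lt t
    have hs := rank_lt s
    rw [twE_cons_iff]
    cases a <;> cases b <;> simp only [rank_cons_false, rank_cons_true] at h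
    · exact Or.inr ⟨rfl, twE_of_rank_eq_add_one (by omega)⟩
    · exact Or.inl ⟨rfl, rfl, rank_injective n (by omega)⟩
    · omega
    · exact Or.inr ⟨rfl, twE_of_rank_eq_add_one (by omega)⟩

noncomputable def rankEquiv (n : ℕ) : (Fin n → Bool) ≃ Fin (2 ^ n) :=
  Equiv.ofBijective (fun x => ⟨rank n x, rank_lt x⟩) <| by
    rw [Fintype.bijective_iff_injective_and_card]
    exact ⟨fun x y h => rank_injective n (congrArg Fin.val h), by simp⟩

end TwE

theorem stmt6 (n : ℕ) :
    ∃ g : (Fin n → Bool) ≃ Fin (2 ^ n),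
      ∀ x y : Fin n → Bool,
        Relation.ReflTransGen (TwE n) x y ↔ g x ≤ g y :=
  ⟨TwE.rankEquiv n, fun _ _ => Relation.reflTransGen_iff_le_of_covBy _
    (fun _ _ h => TwE.rank_le_of_twE h)
    fun _ _ h => TwE.twE_of_rank_eq_add_one (Nat.covBy_iff_add_one_eq.1 (Fin.covBy_iff.1 h)).symm⟩
end

section
/- For every natural number n, there exists exactly one Hamiltonian path through the twisted n-cube; that is, there is exactly one bijection p : Fin (2^n) → (Fin n → Bool) such that T_n (p k) (p (k+1)) holds for every k with k + 1 < 2^n. -/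
/-! Read a vertex `x` as the binary number whose `i`-th digit, most significant first, says
whether `x 0, …, x i` contain an even number of `false`s. These digits determine `x`, and a
non-loop edge flips a coordinate `x i` whose digit is `0`: in digits it sets digit `i` to `1` and
complements all later ones. Hence every edge increases the number, so a Hamiltonian path must
list the vertices in increasing order; conversely, consecutive numbers `w01…1` and `w10…0` are
always joined by such an edge. -/

open Function Finset

theorem Pi.exists_of_toLex_covBy {ι : Type*} [LinearOrder ι] [WellFoundedLT ι]
    {a b : ι → Bool} (h : toLex a ⋖ toLex b) :
    ∃ i, (∀ j < i, a j = b j) ∧ a i = false ∧ b i = true ∧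
      ∀ j, i < j → a j = true ∧ b j = false := by
  obtain ⟨i, hbelow, hi⟩ := h.lt
  simp only [Pi.toLex_apply] at hbelow hi
  obtain ⟨hai, hbi⟩ := Bool.lt_iff.mp hi
  refine ⟨i, hbelow, hai, hbi, fun j hij => ⟨?_, ?_⟩⟩
  · by_contra haj
    have hlt : toLex a < toLex (update a j true) :=
      Pi.lt_toLex_update_self_iff.mpr (by simpa [Bool.lt_iff] using haj)
    refine h.2 hlt ⟨i, fun k hk => ?_, ?_⟩
    · simpa [update_of_ne (hk.trans hij).ne] using hbelow k hk
    · simpa [update_of_ne hij.ne] using hi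
  · by_contra hbj
    have hlt : toLex (update b j false) < toLex b :=
      Pi.toLex_update_lt_self_iff.mpr (by simpa [Bool.lt_iff] using hbj)
    refine h.2 ⟨i, fun k hk => ?_, ?_⟩ hlt
    · simpa [update_of_ne (hk.trans hij).ne] using hbelow k hk
    · simpa [update_of_ne hij.ne] using hi

theorem existsUnique_bijective_path_of_rank {α : Type*} {N : ℕ} (r : α → α → Prop)
    (f : α ≃ Fin N) (hlt : ∀ a b, r a b → a ≠ b → f a < f b)
    (hcov : ∀ a b, f a ⋖ f b → r a b) :
    ∃! p : Fin N → α, Bijective p ∧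
      ∀ k : ℕ, (h : k + 1 < N) → r (p ⟨k, Nat.lt_of_succ_lt h⟩) (p ⟨k + 1, h⟩) := by
  refine ⟨f.symm, ⟨f.symm.bijective, fun k h => hcov _ _ ?_⟩, ?_⟩
  · simp [Fin.covBy_iff]
  rintro q ⟨hq, hpath⟩
  have hmono : StrictMono (f ∘ q) := by
    cases N with
    | zero => exact fun a => a.elim0
    | succ N =>
      exact Fin.strictMono_iff_lt_succ.mpr fun i =>
        hlt _ _ (hpath i (by simp)) (hq.1.ne (Fin.castSucc_lt_succ (i := i)).ne)
  have hid : f ∘ q = id :=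
    (hmono.range_inj strictMono_id).mp (by simp [(f.surjective.comp hq.2).range_eq])
  funext k
  simpa using congrArg f.symm (congrFun hid k)

namespace TwistedCube

variable {n : ℕ}

def zerosBelow (x : Fin n → Bool) (i : Fin n) : ℕ :=
  (univ.filter fun j : Fin n => j < i ∧ x j = false).card

def rankDigits (x : Fin n → Bool) (i : Fin n) : Bool :=
  x i == decide (Even (zerosBelow x i))

theorem zerosBelow_congr {x y : Fin n → Bool} {i : Fin n} (h : ∀ j < i, x j = y j) :
    zerosBelow x i = zerosBelow y i := by
  unfold zerosBelow
  congr 1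
  exact filter_congr fun j _ => and_congr_right fun hj => by rw [h j hj]

theorem even_zerosBelow_update_not {x : Fin n → Bool} {i j : Fin n} (hij : i < j) :
    Even (zerosBelow (update x i (!x i)) j) ↔ ¬Even (zerosBelow x j) := by
  have split : ∀ z : Fin n → Bool, zerosBelow z j = (if z i = false then 1 else 0) +
      ∑ k ∈ univ.erase i, if k < j ∧ z k = false then 1 else 0 := by
    intro z
    rw [zerosBelow, card_filter, ← add_sum_erase _ _ (mem_univ i)]
    simp [hij]
  rw [split, split x, sum_congr rfl fun k hk => by rw [update_of_ne (ne_of_mem_erase hk)]]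
  cases x i <;> simp [Nat.even_add_one, parity_simps]

theorem rankDigits_eq_false_iff {x : Fin n → Bool} {i : Fin n} :
    rankDigits x i = false ↔ (x i = true ↔ Odd (zerosBelow x i)) := by
  rw [rankDigits, ← Nat.not_even_iff_odd]
  cases x i <;> simp

theorem rankDigits_update_not (x : Fin n → Bool) (i j : Fin n) :
    rankDigits (update x i (!x i)) j = if j < i then rankDigits x j else !rankDigits x j := by
  have hlow : ∀ {j}, j ≤ i → zerosBelow (update x i (!x i)) j = zerosBelow x j :=
    fun hj => zerosBelow_congr fun k hk => update_of_ne (hk.trans_le hj).ne _ _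
  rcases lt_trichotomy j i with h | rfl | h
  · rw [if_pos h, rankDigits, rankDigits, update_of_ne h.ne, hlow h.le]
  · rw [if_neg (lt_irrefl j), rankDigits, rankDigits, update_self, hlow le_rfl]
    cases x j <;> simp
  · rw [if_neg h.not_gt]
    simp only [rankDigits, update_of_ne h.ne', even_zerosBelow_update_not h, decide_not]
    cases x j <;> cases decide (Even (zerosBelow x j)) <;> rfl

theorem rankDigits_injective : Injective (rankDigits (n := n)) := by
  intro x y hxy
  funext i
  induction i using WellFoundedLT.induction with
  | _ i ih =>
    have hi := congrFun hxy i
    rw [rankDigits, rankDigits, zerosBelow_congr ih] at hi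
    revert hi
    cases x i <;> cases y i <;> cases decide (Even (zerosBelow y i)) <;> simp

theorem twE_iff_eq_or_exists_update {x y : Fin n → Bool} :
    TwE n x y ↔ x = y ∨ ∃ i, rankDigits x i = false ∧ y = update x i (!x i) := by
  refine or_congr_right (exists_congr fun i => ?_)
  rw [rankDigits_eq_false_iff, eq_update_iff, zerosBelow]
  constructor
  · exact fun ⟨hoff, hflip, hcond⟩ => ⟨hcond, hflip, fun j hj => (hoff j hj).symm⟩
  · exact fun ⟨hcond, hflip, hoff⟩ => ⟨fun j hj => (hoff j hj).symm, hflip, hcond⟩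

noncomputable def rankOrderIso (n : ℕ) : Fin (2 ^ n) ≃o Lex (Fin n → Bool) :=
  Fintype.orderIsoFinOfCardEq _ (by simp)

noncomputable def twistedRank (n : ℕ) : (Fin n → Bool) ≃ Fin (2 ^ n) :=
  ((Equiv.ofBijective _ (Finite.injective_iff_bijective.mp rankDigits_injective)).trans
    toLex).trans (rankOrderIso n).symm.toEquiv

theorem twistedRank_apply (x : Fin n → Bool) :
    twistedRank n x = (rankOrderIso n).symm (toLex (rankDigits x)) :=
  rfl

theorem twistedRank_lt_of_twE {x y : Fin n → Bool} (h : TwE n x y) (hne : x ≠ y) :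
    twistedRank n x < twistedRank n y := by
  obtain rfl | ⟨i, hi, rfl⟩ := twE_iff_eq_or_exists_update.mp h
  · exact absurd rfl hne
  rw [twistedRank_apply, twistedRank_apply, OrderIso.lt_iff_lt]
  exact ⟨i, fun j hj => by simp [rankDigits_update_not, hj],
    by simp [rankDigits_update_not, hi]⟩

theorem twE_of_twistedRank_covBy {x y : Fin n → Bool} (h : twistedRank n x ⋖ twistedRank n y) :
    TwE n x y := by
  rw [twistedRank_apply, twistedRank_apply, apply_covBy_apply_iff] at h
  obtain ⟨i, hbelow, hxi, hyi, habove⟩ := Pi.exists_of_toLex_covBy h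
  refine twE_iff_eq_or_exists_update.mpr
    (Or.inr ⟨i, hxi, rankDigits_injective (funext fun j => ?_)⟩)
  rw [rankDigits_update_not]
  rcases lt_trichotomy j i with hj | rfl | hj
  · simp [hj, hbelow j hj]
  · simp [hxi, hyi]
  · simp [hj.not_gt, habove j hj]

end TwistedCube

theorem stmt7 (n : ℕ) :
    ∃! p : Fin (2 ^ n) → (Fin n → Bool),
      Function.Bijective p ∧
      ∀ k : ℕ, (h : k + 1 < 2 ^ n) →
        TwE n (p ⟨k, Nat.lt_of_succ_lt h⟩) (p ⟨k + 1, h⟩) :=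
  existsUnique_bijective_path_of_rank (TwE n) (TwistedCube.twistedRank n)
    (fun _ _ => TwistedCube.twistedRank_lt_of_twE)
    (fun _ _ => TwistedCube.twE_of_twistedRank_covBy)
end

section
/- For every natural number n and every Hamiltonian path p through the twisted (n+1)-cube, the path contains exactly one edge in dimension 0: for every k with k + 1 < 2^(n+1), the vertices p k and p (k+1) differ in coordinate 0 (i.e., (p k) 0 ≠ (p (k+1)) 0) if and only if k = 2^n - 1. In particular, this single dimension-0 edge connects the Hamiltonian paths through the two copies of the twisted n-cube of which the twisted (n+1)-cube consists. -/
open Finset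

theorem TwE.apply_zero_le {n : ℕ} {x y : Fin (n + 1) → Bool} (h : TwE (n + 1) x y) :
    x 0 ≤ y 0 := by
  rcases h with rfl | ⟨i, hfix, -, hparity⟩
  · exact le_rfl
  obtain rfl | hi := eq_or_ne i 0
  · have hx : x 0 = false := by simpa [Fin.not_lt_zero] using hparity
    exact hx ▸ Bool.false_le _
  · exact (hfix 0 hi.symm).le

theorem Fin.monotone_of_le_succ {α : Type*} [Preorder α] {m : ℕ} {f : Fin m → α}
    (hf : ∀ k (hk : k + 1 < m), f ⟨k, k.lt_succ_self.trans hk⟩ ≤ f ⟨k + 1, hk⟩) : Monotone f := by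
  cases m with
  | zero => exact fun i => i.elim0
  | succ m => exact Fin.monotone_iff_le_succ.mpr fun i => hf i (by simp)

theorem card_filter_apply_zero_eq {α : Type*} [Fintype α] [DecidableEq α] (n : ℕ) (b : α) :
    #{x : Fin (n + 1) → α | x 0 = b} = Fintype.card α ^ n := by
  have : ({x : Fin (n + 1) → α | x 0 = b} : Finset _) =
      univ.map ⟨Fin.cons (α := fun _ => α) b, Fin.cons_right_injective (α := fun _ => α) b⟩ := by
    ext x
    simp only [mem_filter, mem_univ, true_and, mem_map, Function.Embedding.coeFn_mk]
    exact ⟨fun h => ⟨Fin.tail x, h ▸ Fin.cons_self_tail x⟩, by rintro ⟨y, rfl⟩; rfl⟩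
  rw [this, card_map, card_univ, Fintype.card_fun, Fintype.card_fin]

theorem Function.Bijective.card_filter_comp {α β : Type*} [Fintype α] [Fintype β] {f : α → β}
    (hf : f.Bijective) (P : β → Prop) [DecidablePred P] :
    #{a | P (f a)} = #{b | P b} := by
  simp only [← Fintype.card_subtype]
  exact Fintype.card_congr ((Equiv.ofBijective f hf).subtypeEquiv fun _ => Iff.rfl)

theorem Monotone.eq_false_iff_lt_card {m : ℕ} {f : Fin m → Bool} (hf : Monotone f) (k : Fin m) :
    f k = false ↔ (k : ℕ) < #{j | f j = false} := by
  constructor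
  · intro hk
    have hsub : Iic k ⊆ ({j | f j = false} : Finset _) := fun j hj => by
      simpa using Bool.eq_false_of_le_false (hk ▸ hf (mem_Iic.mp hj))
    simpa using card_le_card hsub
  · intro hk
    by_contra hk'
    have hsub : ({j | f j = false} : Finset _) ⊆ Iio k := fun j hj => by
      simp only [mem_filter, mem_univ, true_and] at hj
      by_contra hkj
      have := hf (not_lt.mp (mem_Iio.not.mp hkj))
      exact hk' (Bool.eq_false_of_le_false (hj ▸ this))
    simpa using (card_le_card hsub).trans_lt' hk

theorem stmt8 (n : ℕ) (p : Fin (2 ^ (n + 1)) → (Fin (n + 1) → Bool))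
    (hbij : Function.Bijective p)
    (hpath : ∀ k : ℕ, (h : k + 1 < 2 ^ (n + 1)) →
      TwE (n + 1) (p ⟨k, Nat.lt_of_succ_lt h⟩) (p ⟨k + 1, h⟩)) :
    ∀ k : ℕ, (h : k + 1 < 2 ^ (n + 1)) →
      ((p ⟨k, Nat.lt_of_succ_lt h⟩ 0 ≠ p ⟨k + 1, h⟩ 0) ↔ k = 2 ^ n - 1) := by
  have hmono : Monotone fun k => p k 0 :=
    Fin.monotone_of_le_succ fun k hk => (hpath k hk).apply_zero_le
  have hcard : #{k | p k 0 = false} = 2 ^ n := by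
    rw [hbij.card_filter_comp (fun x => x 0 = false), card_filter_apply_zero_eq, Fintype.card_bool]
  have hfalse (k : Fin (2 ^ (n + 1))) : p k 0 = false ↔ (k : ℕ) < 2 ^ n :=
    hcard ▸ hmono.eq_false_iff_lt_card k
  intro k h
  have hk := hfalse ⟨k, Nat.lt_of_succ_lt h⟩
  have hk1 := hfalse ⟨k + 1, h⟩
  have hpos := Nat.one_le_two_pow (n := n)
  revert hk hk1
  cases p ⟨k, Nat.lt_of_succ_lt h⟩ 0 <;> cases p ⟨k + 1, h⟩ 0 <;> simp <;> omega
end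

section
/- For every dimension-preserving graph morphism g from the twisted m-cube to the twisted n-cube, the image of g is a face: there exists a function f : Fin n → Option Bool such that the range of g equals the set of vertices y : Fin n → Bool satisfying y i = b for every i and b with f i = some b. -/
/-- The pair (x, y) is a non-loop edge flipping exactly coordinate i. -/
def Flips {n : ℕ} (x y : Fin n → Bool) (i : Fin n) : Prop :=
  x i ≠ y i ∧ ∀ j, j ≠ i → x j = y j

/-- A map between cube vertex sets is dimension-preserving. -/
def DimPres {m n : ℕ} (g : (Fin m → Bool) → (Fin n → Bool)) : Prop :=
  ∀ x₁ y₁ x₂ y₂ (i : Fin m), Flips x₁ y₁ i → Flips x₂ y₂ i →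
    (g x₁ = g y₁ ∧ g x₂ = g y₂) ∨
    ∃ j : Fin n, Flips (g x₁) (g y₁) j ∧ Flips (g x₂) (g y₂) j

open Function

section Flips

variable {n : ℕ} {x y : Fin n → Bool} {i j : Fin n}

theorem flips_update_not (x : Fin n → Bool) (i : Fin n) : Flips x (update x i (!x i)) i :=
  ⟨by simp, fun _ hj => (update_of_ne hj _ _).symm⟩

theorem Flips.eq_update_not (h : Flips x y i) : y = update x i (!x i) := by
  funext k
  rcases eq_or_ne k i with rfl | hk
  · simpa [eq_comm, Bool.eq_not] using h.1
  · rw [update_of_ne hk, h.2 k hk]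

theorem Flips.unique (hi : Flips x y i) (hj : Flips x y j) : i = j := by
  by_contra hne
  exact hj.1 (hi.2 j (Ne.symm hne))

end Flips

theorem mem_of_forall_flip_mem {ι : Type*} [Fintype ι] [DecidableEq ι] {S : Set (ι → Bool)}
    {J : Set ι} {z : ι → Bool} (hz : z ∈ S) (hS : ∀ w ∈ S, ∀ i ∈ J, update w i (!w i) ∈ S)
    {y : ι → Bool} (hy : ∀ i ∉ J, y i = z i) : y ∈ S := by
  suffices h : ∀ s : Finset ι, (∀ i ∈ s, i ∈ J) → ∀ y : ι → Bool, (∀ i ∉ s, y i = z i) → y ∈ S by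
    refine h (Finset.univ.filter fun i => y i ≠ z i) (fun i hi => ?_) y (fun i hi => ?_)
    · by_contra hiJ
      exact (Finset.mem_filter.1 hi).2 (hy i hiJ)
    · simpa using hi
  intro s
  induction s using Finset.induction_on with
  | empty =>
    intro _ y hy
    rwa [funext fun i => hy i (Finset.notMem_empty i)]
  | @insert a s _ ih =>
    intro hsJ y hy
    have hy' : update y a (z a) ∈ S := ih (fun i hi => hsJ i (Finset.mem_insert_of_mem hi)) _
      fun i hi => by
        rcases eq_or_ne i a with rfl | hia
        · simp
        · rw [update_of_ne hia]
          exact hy i (by simp [hia, hi])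
    by_cases hya : y a = z a
    · rwa [← hya, update_eq_self] at hy'
    · convert hS _ hy' a (hsJ a (Finset.mem_insert_self a s)) using 1
      rw [update_self, update_idem, ← Bool.eq_not.2 hya, update_eq_self]

namespace DimPres

variable {m n : ℕ} {g : (Fin m → Bool) → (Fin n → Bool)}

theorem loop_or_flips (hd : DimPres g) (i : Fin m) :
    (∀ x, g x = g (update x i (!x i))) ∨
      ∃ j, ∀ x, Flips (g x) (g (update x i (!x i))) j := by
  by_cases hloop : ∀ x, g x = g (update x i (!x i))
  · exact Or.inl hloop
  obtain ⟨x, hx⟩ := not_forall.1 hloop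
  have hfx := flips_update_not x i
  obtain ⟨h, -⟩ | ⟨j, hj, -⟩ := hd _ _ _ _ i hfx hfx
  · exact absurd h hx
  refine Or.inr ⟨j, fun x' => ?_⟩
  obtain ⟨h, -⟩ | ⟨k, hk, hk'⟩ := hd _ _ _ _ i hfx (flips_update_not x' i)
  · exact absurd h hx
  · rwa [← hk.unique hj]

def mappedDirections (g : (Fin m → Bool) → (Fin n → Bool)) : Set (Fin n) :=
  {j | ∃ i, ∀ x, Flips (g x) (g (update x i (!x i))) j}

theorem apply_eq_of_notMem_mappedDirections (hd : DimPres g) {j : Fin n} (hj : j ∉ mappedDirections g)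
    (x x' : Fin m → Bool) : g x' j = g x j := by
  refine mem_of_forall_flip_mem (S := {w | g w j = g x j}) (J := Set.univ) rfl
    (fun w hw i _ => ?_) (by simp)
  rcases hd.loop_or_flips i with hloop | ⟨j', hj'⟩
  · rw [Set.mem_ofPred_eq, ← hloop, hw]
  · have hne : j' ≠ j := fun h => hj ⟨i, h ▸ hj'⟩
    rw [Set.mem_ofPred_eq, ← (hj' w).2 j hne.symm, hw]

theorem update_not_mem_range {j : Fin n} (hj : j ∈ mappedDirections g) {w : Fin n → Bool}
    (hw : w ∈ Set.range g) : update w j (!w j) ∈ Set.range g := by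
  obtain ⟨i, hi⟩ := hj
  obtain ⟨x, rfl⟩ := hw
  exact ⟨_, (hi x).eq_update_not⟩

end DimPres

theorem stmt10_general (m n : ℕ) (g : (Fin m → Bool) → (Fin n → Bool))
    (hd : DimPres g) :
    ∃ f : Fin n → Option Bool,
      Set.range g = {y : Fin n → Bool | ∀ i b, f i = some b → y i = b} := by
  classical
  let x₀ : Fin m → Bool := fun _ => false
  refine ⟨fun j => if j ∈ DimPres.mappedDirections g then none else some (g x₀ j), ?_⟩
  ext y
  simp only [Set.mem_ofPred_eq, Option.ite_none_left_eq_some, Option.some.injEq]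
  constructor
  · rintro ⟨x, rfl⟩ j b ⟨hj, rfl⟩
    exact hd.apply_eq_of_notMem_mappedDirections hj x₀ x
  · intro hy
    exact mem_of_forall_flip_mem (Set.mem_range_self x₀)
      (fun _ hw _ hj => DimPres.update_not_mem_range hj hw) fun j hj => hy j _ ⟨hj, rfl⟩

theorem stmt10 (m n : ℕ) (g : (Fin m → Bool) → (Fin n → Bool))
    (hg : IsGraphHom (TwE m) (TwE n) g) (hd : DimPres g) :
    ∃ f : Fin n → Option Bool,
      Set.range g = {y : Fin n → Bool | ∀ i b, f i = some b → y i = b} :=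
  stmt10_general m n g hd
end

section
/- Every dimension-preserving graph morphism g from the twisted m-cube to the twisted n-cube factors uniquely as an injective morphism after a surjective morphism: there exist a unique natural number k, a unique surjective dimension-preserving graph morphism s from the twisted m-cube to the twisted k-cube, and a unique injective dimension-preserving graph morphism h from the twisted k-cube to the twisted n-cube, such that g = h ∘ s. -/
/-!
Flipping coordinate `l` of a vertex reverses the orientation of its `i`-edge when `l ≤ i` and
preserves it when `i < l`. Applied to the square spanned by an `i`-edge and an `l`-edge, this
shows that a dimension-preserving morphism `g` sends the directions it does not collapse strictly
monotonically to directions of the target, and that it collapses every direction above a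
collapsed one. Hence `g` collapses exactly the directions `≥ k` for some `k`, factors through the
truncation to the first `k` coordinates, and the second factor, which sends each direction `a`
to a direction `ψ a` with `ψ` injective, is injective.

For uniqueness, `k` is read off from `Nat.card (range g) = 2 ^ k`. The surjective factor does not
collapse the directions `< k`, so it maps them strictly monotonically to `Fin k`, i.e. identically;
since the orientation of an `a`-edge only depends on the coordinates `≤ a`, induction on `a` then
shows that it is the truncation.
-/

open Finset Function

theorem IsLowerSet.exists_mem_iff_val_lt {m : ℕ} {s : Set (Fin m)} (hs : IsLowerSet s) :
    ∃ k ≤ m, ∀ i : Fin m, i ∈ s ↔ (i : ℕ) < k := by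
  rcases hs.eq_univ_or_Iio with rfl | ⟨a, rfl⟩
  · exact ⟨m, le_rfl, fun i => iff_of_true trivial i.isLt⟩
  · exact ⟨a, a.isLt.le, fun _ => Fin.lt_def⟩

theorem IsGraphHom.comp {U V W : Type*} {E : U → U → Prop} {F : V → V → Prop}
    {G : W → W → Prop} {f : U → V} {g : V → W} (hg : IsGraphHom F G g)
    (hf : IsGraphHom E F f) :
    IsGraphHom E G (g ∘ f) :=
  fun x y h => hg _ _ (hf x y h)

theorem natCard_range_comp_eq_two_pow {X : Type*} {k n : ℕ} {s : X → Fin k → Bool}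
    {h : (Fin k → Bool) → Fin n → Bool}
    (hs : Surjective s) (hh : Injective h) : Nat.card (Set.range (h ∘ s)) = 2 ^ k := by
  rw [hs.range_comp, Nat.card_range_of_injective hh]
  simp

section Flip

variable {ι : Type*} [DecidableEq ι]

def flipAt (x : ι → Bool) (i : ι) : ι → Bool := update x i (!x i)

@[simp]
theorem flipAt_apply_self (x : ι → Bool) (i : ι) : flipAt x i i = !x i := update_self ..

@[simp]
theorem flipAt_apply_of_ne (x : ι → Bool) {i j : ι} (h : j ≠ i) : flipAt x i j = x j :=
  update_of_ne h ..

@[simp]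
theorem flipAt_flipAt (x : ι → Bool) (i : ι) : flipAt (flipAt x i) i = x := by
  ext j
  by_cases h : j = i
  · subst h; simp
  · simp [h]

theorem flipAt_ne_self (x : ι → Bool) (i : ι) : flipAt x i ≠ x :=
  fun h => by simpa using congrFun h i

theorem flipAt_eq_flipAt_iff {x : ι → Bool} {i j : ι} : flipAt x i = flipAt x j ↔ i = j := by
  refine ⟨fun h => ?_, fun h => h ▸ rfl⟩
  by_contra hij
  simpa [hij] using congrFun h i

theorem eq_flipAt_iff {x y : ι → Bool} {i : ι} :
    y = flipAt x i ↔ (∀ j, j ≠ i → x j = y j) ∧ y i = !x i := by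
  refine ⟨by rintro rfl; simp +contextual, fun ⟨hne, hi⟩ => ?_⟩
  ext j
  by_cases h : j = i
  · subst h; simp [hi]
  · simp [h, hne j h]

theorem flipAt_induction {P : (ι → Bool) → Prop} {x : ι → Bool} (T : Finset ι) (hx : P x)
    (hstep : ∀ y, ∀ i ∈ T, P y → P (flipAt y i)) :
    ∀ y : ι → Bool, (∀ i ∉ T, y i = x i) → P y := by
  induction T using Finset.induction_on with
  | empty => exact fun y hy => (funext fun i => hy i (notMem_empty i)) ▸ hx
  | insert a T _ ih =>
    specialize ih fun y i hi => hstep y i (mem_insert_of_mem hi)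
    intro y hy
    by_cases ha : y a = x a
    · refine ih y fun i hi => ?_
      by_cases hia : i = a
      · exact hia ▸ ha
      · exact hy i (by simp [hia, hi])
    · rw [← flipAt_flipAt y a]
      refine hstep _ a (mem_insert_self a T) (ih _ fun i hi => ?_)
      by_cases hia : i = a
      · subst hia; exact (flipAt_apply_self y i).trans (Bool.not_eq.2 ha)
      · rw [flipAt_apply_of_ne _ hia]; exact hy i (by simp [hia, hi])

end Flip

section TwistedCube

variable {n : ℕ}

theorem flips_iff {x y : Fin n → Bool} {i : Fin n} : Flips x y i ↔ y = flipAt x i := by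
  rw [eq_flipAt_iff, Flips, and_comm, Bool.eq_not_iff, ne_comm]

def OddBelow (x : Fin n → Bool) (i : Fin n) : Prop :=
  Odd (Finset.univ.filter (fun j : Fin n => j < i ∧ x j = false)).card

def IsSource (x : Fin n → Bool) (i : Fin n) : Prop := x i = true ↔ OddBelow x i

theorem oddBelow_congr {x y : Fin n → Bool} {i : Fin n} (h : ∀ j < i, x j = y j) :
    OddBelow x i ↔ OddBelow y i := by
  unfold OddBelow
  rw [filter_congr fun j _ => and_congr_right fun hj => by rw [h j hj]]

theorem oddBelow_flipAt_of_lt {x : Fin n → Bool} {i l : Fin n} (hl : l < i) :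
    OddBelow (flipAt x l) i ↔ ¬OddBelow x i := by
  suffices key :
      ∀ y : Fin n → Bool, y l = false → (OddBelow y i ↔ ¬OddBelow (flipAt y l) i) by
    cases hx : x l
    · rw [key x hx]; tauto
    · simpa using key (flipAt x l) (by simp [hx])
  intro y hy
  have hS : univ.filter (fun j : Fin n => j < i ∧ y j = false) =
      insert l (univ.filter fun j : Fin n => j < i ∧ flipAt y l j = false) := by
    ext j
    by_cases hj : j = l
    · subst hj; simp [hl, hy]
    · simp [hj]
  unfold OddBelow
  rw [hS, card_insert_of_notMem (by simp [hy]), Nat.odd_add_one]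

theorem isSource_flipAt_of_le {x : Fin n → Bool} {i l : Fin n} (hl : l ≤ i) :
    IsSource (flipAt x l) i ↔ ¬IsSource x i := by
  unfold IsSource
  rcases hl.lt_or_eq with hl | rfl
  · rw [flipAt_apply_of_ne _ hl.ne', oddBelow_flipAt_of_lt hl]; tauto
  · rw [flipAt_apply_self, oddBelow_congr fun j hj => flipAt_apply_of_ne x hj.ne]
    cases x l <;> simp

theorem isSource_flipAt_of_lt {x : Fin n → Bool} {i l : Fin n} (hl : i < l) :
    IsSource (flipAt x l) i ↔ IsSource x i := by
  unfold IsSource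
  rw [flipAt_apply_of_ne _ hl.ne, oddBelow_congr fun j hj => flipAt_apply_of_ne x (hj.trans hl).ne]

theorem isSource_or_isSource_flipAt (x : Fin n → Bool) (i : Fin n) :
    IsSource x i ∨ IsSource (flipAt x i) i := by
  rw [isSource_flipAt_of_le le_rfl]; tauto

theorem exists_isSource (i : Fin n) : ∃ x : Fin n → Bool, IsSource x i :=
  (isSource_or_isSource_flipAt (fun _ => false) i).elim (⟨_, ·⟩) (⟨_, ·⟩)

theorem twE_iff {x y : Fin n → Bool} :
    TwE n x y ↔ x = y ∨ ∃ i, IsSource x i ∧ y = flipAt x i := by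
  simp only [TwE, IsSource, OddBelow, eq_flipAt_iff]
  constructor <;> rintro (h | ⟨i, h₁, h₂, h₃⟩)
  exacts [.inl h, .inr ⟨i, h₃, h₁, h₂⟩, .inl h, .inr ⟨i, h₂, h₃, h₁⟩]

theorem twE_flipAt_iff {x : Fin n → Bool} {i : Fin n} :
    TwE n x (flipAt x i) ↔ IsSource x i := by
  simp [twE_iff, (flipAt_ne_self x i).symm, flipAt_eq_flipAt_iff, eq_comm (a := i)]

end TwistedCube

section Morphism

variable {m n : ℕ}

def Collapses (g : (Fin m → Bool) → Fin n → Bool) (i : Fin m) : Prop :=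
  ∀ x, g (flipAt x i) = g x

def SendsTo (g : (Fin m → Bool) → Fin n → Bool) (i : Fin m) (j : Fin n) : Prop :=
  ∀ x, g (flipAt x i) = flipAt (g x) j

theorem isGraphHom_iff {g : (Fin m → Bool) → Fin n → Bool} :
    IsGraphHom (TwE m) (TwE n) g ↔ ∀ x i, IsSource x i → TwE n (g x) (g (flipAt x i)) := by
  refine ⟨fun hg x i hx => hg _ _ (twE_flipAt_iff.2 hx), fun h x y hxy => ?_⟩
  rcases twE_iff.1 hxy with rfl | ⟨i, hx, rfl⟩
  exacts [.inl rfl, h x i hx]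

theorem dimPres_iff {g : (Fin m → Bool) → Fin n → Bool} :
    DimPres g ↔ ∀ i, Collapses g i ∨ ∃ j, SendsTo g i j := by
  simp only [DimPres, flips_iff]
  constructor
  · intro hd i
    set x₀ : Fin m → Bool := fun _ => false
    rcases hd x₀ _ x₀ _ i rfl rfl with ⟨h₀, -⟩ | ⟨j, h₀, -⟩
    · refine .inl fun x => ?_
      rcases hd x₀ _ x _ i rfl rfl with ⟨-, h⟩ | ⟨j, h, -⟩
      · exact h.symm
      · exact absurd (h₀ ▸ h).symm (flipAt_ne_self _ j)
    · refine .inr ⟨j, fun x => ?_⟩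
      rcases hd x₀ _ x _ i rfl rfl with ⟨h, -⟩ | ⟨j', h, h'⟩
      · exact absurd (h ▸ h₀).symm (flipAt_ne_self _ j)
      · rwa [flipAt_eq_flipAt_iff.1 (h.symm.trans h₀)] at h'
  · rintro h x₁ _ x₂ _ i rfl rfl
    rcases h i with hc | ⟨j, hj⟩
    · exact .inl ⟨(hc x₁).symm, (hc x₂).symm⟩
    · exact .inr ⟨j, hj x₁, hj x₂⟩

variable {g : (Fin m → Bool) → Fin n → Bool}

theorem SendsTo.isSource (hg : IsGraphHom (TwE m) (TwE n) g) {i : Fin m} {j : Fin n}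
    (h : SendsTo g i j) {x : Fin m → Bool} (hx : IsSource x i) : IsSource (g x) j := by
  have := hg _ _ (twE_flipAt_iff.2 hx)
  rwa [h, twE_flipAt_iff] at this

theorem SendsTo.lt_of_lt (hg : IsGraphHom (TwE m) (TwE n) g) {i l : Fin m} {j j' : Fin n}
    (hi : SendsTo g i j) (hl : SendsTo g l j') (hil : i < l) : j < j' := by
  by_contra! hle
  obtain ⟨x, hx⟩ := exists_isSource i
  have h := hi.isSource hg ((isSource_flipAt_of_lt hil).2 hx)
  rw [hl, isSource_flipAt_of_le hle] at h
  exact h (hi.isSource hg hx)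

theorem SendsTo.not_collapses_of_lt (hg : IsGraphHom (TwE m) (TwE n) g) {i l : Fin m}
    {j : Fin n} (hi : SendsTo g i j) (hl : l < i) : ¬Collapses g l := by
  intro hc
  obtain ⟨x, hx⟩ := exists_isSource i
  have hx' : IsSource (flipAt (flipAt x l) i) i :=
    (isSource_or_isSource_flipAt _ i).resolve_left ((isSource_flipAt_of_le hl.le).1 · hx)
  have h := hi.isSource hg hx'
  rw [hi, hc, isSource_flipAt_of_le le_rfl] at h
  exact h (hi.isSource hg hx)

theorem isLowerSet_setOf_not_collapses (hg : IsGraphHom (TwE m) (TwE n) g) (hd : DimPres g) :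
    IsLowerSet {i | ¬Collapses g i} := by
  intro i l hli hi
  rcases hli.lt_or_eq with hli | rfl
  · obtain ⟨j, hj⟩ := ((dimPres_iff.1 hd) i).resolve_left hi
    exact hj.not_collapses_of_lt hg hli
  · exact hi

theorem exists_strictMono_sendsTo (hg : IsGraphHom (TwE m) (TwE n) g) (hd : DimPres g)
    {k : ℕ} (hk : k ≤ m) (hact : ∀ a : Fin k, ¬Collapses g (Fin.castLE hk a)) :
    ∃ ψ : Fin k → Fin n, StrictMono ψ ∧ ∀ a, SendsTo g (Fin.castLE hk a) (ψ a) := by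
  choose ψ hψ using fun a => ((dimPres_iff.1 hd) _).resolve_left (hact a)
  refine ⟨ψ, fun a b hab => ?_, hψ⟩
  exact (hψ a).lt_of_lt hg (hψ b) ((Fin.castLE_lt_castLE_iff hk).2 hab)

theorem injective_of_sendsTo {ψ : Fin m → Fin n} (hψ : Injective ψ)
    (h : ∀ i, SendsTo g i (ψ i)) : Injective g := by
  intro u v huv
  suffices key : ∀ i, (g u (ψ i) = g v (ψ i) ↔ u i = v i) from
    funext fun i => (key i).1 (congrFun huv _)
  refine flipAt_induction (P := fun v => ∀ i, (g u (ψ i) = g v (ψ i) ↔ u i = v i)) univ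
    (fun _ => iff_of_true rfl rfl) (fun y l _ hy i => ?_) v (by simp)
  rw [h l]
  by_cases hil : i = l
  · subst hil
    simp only [flipAt_apply_self, Bool.eq_not]
    exact not_congr (hy i)
  · rw [flipAt_apply_of_ne _ hil, flipAt_apply_of_ne _ (hψ.ne hil)]
    exact hy i

theorem eq_of_collapses {T : Finset (Fin m)} (hT : ∀ i ∈ T, Collapses g i)
    {x y : Fin m → Bool} (hxy : ∀ i ∉ T, y i = x i) : g y = g x :=
  flipAt_induction (P := fun y => g y = g x) T rfl (fun y i hi hy => (hT i hi y).trans hy) y hxy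

end Morphism

def padFalse {k : ℕ} (m : ℕ) (u : Fin k → Bool) : Fin m → Bool :=
  fun j => if h : (j : ℕ) < k then u ⟨j, h⟩ else false

section Truncation

variable {k m : ℕ} (hk : k ≤ m)

@[simp]
theorem padFalse_castLE (u : Fin k → Bool) (a : Fin k) :
    padFalse m u (Fin.castLE hk a) = u a := by
  simp [padFalse]

@[simp]
theorem take_padFalse (u : Fin k → Bool) : Fin.take k hk (padFalse m u) = u :=
  funext (padFalse_castLE hk u)

theorem take_comp_padFalse : Fin.take k hk ∘ padFalse m = id :=
  funext (take_padFalse hk)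

theorem take_surjective : Surjective (Fin.take k hk : (Fin m → Bool) → Fin k → Bool) :=
  fun u => ⟨_, take_padFalse hk u⟩

theorem padFalse_flipAt (u : Fin k → Bool) (a : Fin k) :
    padFalse m (flipAt u a) = flipAt (padFalse m u) (Fin.castLE hk a) := by
  ext j
  by_cases hj : j = Fin.castLE hk a
  · subst hj; simp
  · have hj' : ∀ h : (j : ℕ) < k, (⟨j, h⟩ : Fin k) ≠ a :=
      fun h ha => hj (by ext; simp [← ha])
    simp +contextual [padFalse, flipAt_apply_of_ne _ hj, hj']

theorem take_sendsTo (a : Fin k) :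
    SendsTo (Fin.take k hk) (Fin.castLE hk a) a := by
  intro x
  ext b
  by_cases hb : b = a
  · subst hb; simp
  · simp [hb]

theorem take_collapses {i : Fin m} (hi : k ≤ i) :
    Collapses (Fin.take k hk) i := by
  intro x
  ext b
  exact flipAt_apply_of_ne _ fun h => (b.isLt.trans_le hi).ne (congrArg Fin.val h)

theorem oddBelow_castLE (x : Fin m → Bool) (a : Fin k) :
    OddBelow x (Fin.castLE hk a) ↔ OddBelow (Fin.take k hk x) a := by
  have hmap : univ.filter (fun j : Fin m => j < Fin.castLE hk a ∧ x j = false) =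
      (univ.filter fun b : Fin k => b < a ∧ x (Fin.castLE hk b) = false).map
        (Fin.castLEEmb hk) := by
    ext j
    simp only [mem_filter, mem_univ, true_and, mem_map, Fin.castLEEmb_apply]
    constructor
    · rintro ⟨hj, hx⟩
      exact ⟨⟨j, Fin.lt_def.1 hj |>.trans a.isLt⟩, ⟨hj, hx⟩, rfl⟩
    · rintro ⟨b, ⟨hb, hx⟩, rfl⟩
      exact ⟨hb, hx⟩
  rw [OddBelow, hmap, card_map]
  rfl

theorem isSource_castLE (x : Fin m → Bool) (a : Fin k) :
    IsSource x (Fin.castLE hk a) ↔ IsSource (Fin.take k hk x) a := by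
  rw [IsSource, IsSource, oddBelow_castLE]
  rfl

theorem take_isGraphHom :
    IsGraphHom (TwE m) (TwE k) (Fin.take k hk) := by
  refine isGraphHom_iff.2 fun x i hx => ?_
  by_cases hi : (i : ℕ) < k
  · obtain ⟨a, rfl⟩ : ∃ a : Fin k, Fin.castLE hk a = i := ⟨⟨i, hi⟩, rfl⟩
    rw [take_sendsTo, twE_flipAt_iff, ← isSource_castLE]
    exact hx
  · rw [take_collapses hk (not_lt.1 hi)]
    exact .inl rfl

theorem take_dimPres : DimPres (Fin.take k hk) := by
  refine dimPres_iff.2 fun i => ?_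
  by_cases hi : (i : ℕ) < k
  · exact .inr ⟨⟨i, hi⟩, take_sendsTo hk ⟨i, hi⟩⟩
  · exact .inl (take_collapses hk (not_lt.1 hi))

theorem padFalse_isGraphHom (hk : k ≤ m) : IsGraphHom (TwE k) (TwE m) (padFalse m) := by
  refine isGraphHom_iff.2 fun u a hu => ?_
  rwa [padFalse_flipAt hk, twE_flipAt_iff, isSource_castLE hk, take_padFalse]

variable {n : ℕ} {g : (Fin m → Bool) → Fin n → Bool}

theorem SendsTo.comp_padFalse {a : Fin k} {j : Fin n} (h : SendsTo g (Fin.castLE hk a) j) :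
    SendsTo (g ∘ padFalse m) a j := by
  intro u
  rw [comp_apply, comp_apply, padFalse_flipAt hk, h]

theorem comp_padFalse_take (hcol : ∀ i : Fin m, k ≤ i → Collapses g i) :
    (g ∘ padFalse m) ∘ Fin.take k hk = g := by
  ext1 x
  refine eq_of_collapses (T := univ.filter fun i : Fin m => k ≤ i) (by simpa using hcol)
    fun i hi => ?_
  have hi : (i : ℕ) < k := by simpa using hi
  simp [padFalse, hi]

theorem eq_take_of_sendsTo {σ : (Fin m → Bool) → Fin k → Bool}
    (hσ : IsGraphHom (TwE m) (TwE k) σ) (h : ∀ a, SendsTo σ (Fin.castLE hk a) a) :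
    σ = Fin.take k hk := by
  suffices key : ∀ a x, σ x a = x (Fin.castLE hk a) from funext fun x => funext fun a => key a x
  intro a
  induction a using WellFoundedLT.induction with
  | _ a ih =>
    have hsrc : ∀ y, IsSource y (Fin.castLE hk a) → σ y a = y (Fin.castLE hk a) := by
      intro y hy
      have hσy := (h a).isSource hσ hy
      rw [isSource_castLE] at hy
      refine Bool.eq_iff_iff.2 (hσy.trans (Iff.trans ?_ hy.symm))
      exact oddBelow_congr fun b hb => ih b hb y
    intro x
    rcases isSource_or_isSource_flipAt x (Fin.castLE hk a) with hx | hx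
    · exact hsrc x hx
    · have hflip := hsrc _ hx
      rw [h a, flipAt_apply_self, flipAt_apply_self] at hflip
      exact Bool.not_inj hflip

end Truncation

theorem stmt12 (m n : ℕ) (g : (Fin m → Bool) → (Fin n → Bool))
    (hg : IsGraphHom (TwE m) (TwE n) g) (hd : DimPres g) :
    ∃! F : Σ k : ℕ,
        ((Fin m → Bool) → (Fin k → Bool)) × ((Fin k → Bool) → (Fin n → Bool)),
      (IsGraphHom (TwE m) (TwE F.1) F.2.1 ∧ DimPres F.2.1 ∧
        Function.Surjective F.2.1) ∧
      (IsGraphHom (TwE F.1) (TwE n) F.2.2 ∧ DimPres F.2.2 ∧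
        Function.Injective F.2.2) ∧
      g = F.2.2 ∘ F.2.1 := by
  obtain ⟨k, hk, hact⟩ := (isLowerSet_setOf_not_collapses hg hd).exists_mem_iff_val_lt
  have hcol (i : Fin m) (hi : k ≤ i) : Collapses g i :=
    not_not.1 fun h => hi.not_gt ((hact i).1 h)
  obtain ⟨ψ, hψ, hgψ⟩ := exists_strictMono_sendsTo hg hd hk fun a => (hact _).2 a.isLt
  have hsends (a : Fin k) : SendsTo (g ∘ padFalse m) a (ψ a) := (hgψ a).comp_padFalse hk
  have hinj : Injective (g ∘ padFalse m) := injective_of_sendsTo hψ.injective hsends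
  refine ⟨⟨k, Fin.take k hk, g ∘ padFalse m⟩,
    ⟨⟨take_isGraphHom hk, take_dimPres hk, take_surjective hk⟩,
      ⟨hg.comp (padFalse_isGraphHom hk), dimPres_iff.2 fun a => .inr ⟨ψ a, hsends a⟩,
        hinj⟩,
      (comp_padFalse_take hk hcol).symm⟩, ?_⟩
  rintro ⟨k', s, h⟩ ⟨⟨hs, hsd, hss⟩, ⟨-, -, hh⟩, hgsh⟩
  dsimp only at hs hsd hss hh hgsh
  obtain rfl : k = k' := Nat.pow_right_injective le_rfl <| show 2 ^ k = 2 ^ k' by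
    rw [← natCard_range_comp_eq_two_pow hss hh,
      ← natCard_range_comp_eq_two_pow (take_surjective hk) hinj,
      comp_padFalse_take hk hcol, ← hgsh]
  obtain ⟨ρ, hρ, hsρ⟩ := exists_strictMono_sendsTo hs hsd hk fun a hc =>
    (hact _).2 a.isLt fun x => by rw [hgsh]; exact congrArg h (hc x)
  obtain rfl : s = Fin.take k hk := eq_take_of_sendsTo hk hs (by simpa [hρ.eq_id] using hsρ)
  subst hgsh
  simp [comp_assoc, take_comp_padFalse hk]
end

section
/- Let g be a dimension-preserving graph morphism from the standard m-cube to the standard n-cube. Then g is injective on dimensions: if (x₁, y₁) and (x₂, y₂) are non-loop edges of the standard m-cube flipping coordinates i₁ and i₂ respectively, and their images (g x₁, g y₁) and (g x₂, g y₂) are both non-loop edges flipping the same coordinate j of the standard n-cube, then i₁ = i₂. -/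
open Function

theorem Flips.unique_s15 {n : ℕ} {x y : Fin n → Bool} {j j' : Fin n}
    (h : Flips x y j) (h' : Flips x y j') : j = j' := by
  by_contra hne
  exact h.1 (h'.2 j hne)

theorem flips_update {n : ℕ} {x : Fin n → Bool} {i : Fin n} {b : Bool} (h : x i ≠ b) :
    Flips x (update x i b) i :=
  ⟨by rwa [update_self], fun _ hj => (update_of_ne hj b x).symm⟩

theorem cubeE_update_true {n : ℕ} {x : Fin n → Bool} {i : Fin n} (h : x i = false) :
    CubeE n x (update x i true) :=
  Or.inr ⟨i, h, update_self i true x, fun _ hj => (update_of_ne hj true x).symm⟩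

theorem CubeE.apply_eq_false_and_apply_eq_true {n : ℕ} {x y : Fin n → Bool} {j : Fin n}
    (he : CubeE n x y) (hf : Flips x y j) : x j = false ∧ y j = true := by
  rcases he with rfl | ⟨i, hxi, hyi, -⟩
  · exact absurd rfl hf.1
  · obtain rfl : i = j := by
      by_contra hne
      exact absurd (hf.2 i hne) (by simp [hxi, hyi])
    exact ⟨hxi, hyi⟩

theorem DimPres.flips_of_flips {m n : ℕ} {g : (Fin m → Bool) → (Fin n → Bool)} (hd : DimPres g)
    {a b c d : Fin m → Bool} {i : Fin m} {j : Fin n}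
    (hab : Flips a b i) (hcd : Flips c d i) (hj : Flips (g a) (g b) j) :
    Flips (g c) (g d) j := by
  rcases hd a b c d i hab hcd with ⟨hg, -⟩ | ⟨j', hj', hcd'⟩
  · exact absurd (congrFun hg j) hj.1
  · rwa [hj'.unique_s15 hj] at hcd'

theorem stmt15_general (m n : ℕ) (g : (Fin m → Bool) → (Fin n → Bool))
    (hg : IsGraphHom (CubeE m) (CubeE n) g) (hd : DimPres g)
    (x₁ y₁ x₂ y₂ : Fin m → Bool) (i₁ i₂ : Fin m) (j : Fin n)
    (hf₁ : Flips x₁ y₁ i₁)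
    (hf₂ : Flips x₂ y₂ i₂)
    (hgf₁ : Flips (g x₁) (g y₁) j)
    (hgf₂ : Flips (g x₂) (g y₂) j) :
    i₁ = i₂ := by
  by_contra hne
  let p : Fin m → Bool := fun _ => false
  let q := update p i₁ true
  have hp : p i₁ = false := rfl
  have hq : q i₂ = false := update_of_ne (Ne.symm hne) true p
  have hpq := hd.flips_of_flips hf₁ (flips_update (hp.trans_ne Bool.false_ne_true)) hgf₁
  have hqr := hd.flips_of_flips hf₂ (flips_update (hq.trans_ne Bool.false_ne_true)) hgf₂
  have hup := ((hg _ _ (cubeE_update_true hp)).apply_eq_false_and_apply_eq_true hpq).2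
  have hdown := ((hg _ _ (cubeE_update_true hq)).apply_eq_false_and_apply_eq_true hqr).1
  exact Bool.false_ne_true (hdown.symm.trans hup)

theorem stmt15 (m n : ℕ) (g : (Fin m → Bool) → (Fin n → Bool))
    (hg : IsGraphHom (CubeE m) (CubeE n) g) (hd : DimPres g)
    (x₁ y₁ x₂ y₂ : Fin m → Bool) (i₁ i₂ : Fin m) (j : Fin n)
    (he₁ : CubeE m x₁ y₁) (hf₁ : Flips x₁ y₁ i₁)
    (he₂ : CubeE m x₂ y₂) (hf₂ : Flips x₂ y₂ i₂)
    (hge₁ : CubeE n (g x₁) (g y₁)) (hgf₁ : Flips (g x₁) (g y₁) j)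
    (hge₂ : CubeE n (g x₂) (g y₂)) (hgf₂ : Flips (g x₂) (g y₂) j) :
    i₁ = i₂ :=
  stmt15_general m n g hg hd x₁ y₁ x₂ y₂ i₁ i₂ j hf₁ hf₂ hgf₁ hgf₂
end
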